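/- arXiv:1912.12556 — 4 statements merged into one kernel-verified Lean document; each statement's English description precedes it below -/
import Mathlib

section
/- Let 𝔤 be a finite-dimensional Lie algebra over a finite field F_q, equipped with a nondegenerate invariant bilinear form ⟨·,·⟩ (invariant means ⟨[X,Y],Z⟩ = ⟨X,[Y,Z]⟩ for all X,Y,Z ∈ 𝔤). Then the number of solutions satisfies #{(X_1,Y_1,X_2,Y_2) ∈ 𝔤⁴ : [X_1,Y_1] + [X_2,Y_2] = 0} = |𝔤| · Σ_{Z ∈ 𝔤} |C_𝔤(Z)|², where C_𝔤(Z) = {W ∈ 𝔤 : [Z,W] = 0} is the centralizer of Z and |·| denotes cardinality. -/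
/-!
Fix a nontrivial additive character `ψ` of `F`. By nondegeneracy of `B`, `∑_Z ψ (B Z v)` is `|𝔤|`
for `v = 0` and vanishes otherwise, so `|𝔤|` times the count equals
`∑_Z (∑_{X,Y} ψ (B Z ⁅X, Y⁆))²`. Invariance turns `B Z ⁅X, Y⁆` into `B ⁅Z, X⁆ Y`, and summing over
`Y` leaves `|𝔤|` exactly when `X` centralizes `Z`; hence the inner sum is `|𝔤| · |C_𝔤(Z)|`.
-/

namespace AddChar

variable {F V R : Type*} [Field F] [AddCommGroup V] [Module F V] [CommRing R] {ψ : AddChar F R}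

lemma compAddMonoidHom_linearMap_eq_zero_iff (hψ : ψ ≠ 0) (f : V →ₗ[F] F) :
    ψ.compAddMonoidHom f.toAddMonoidHom = 0 ↔ f = 0 := by
  refine ⟨fun h => ?_, fun hf => by ext v; simp [hf]⟩
  by_contra hf
  obtain ⟨t, ht⟩ := ne_zero_iff.1 hψ
  obtain ⟨v, rfl⟩ := LinearMap.surjective hf t
  exact ht (DFunLike.congr_fun h v)

variable [Fintype V] [IsDomain R]

lemma sum_apply_linearMap [DecidableEq (V →ₗ[F] F)] (hψ : ψ ≠ 0) (f : V →ₗ[F] F) :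
    ∑ v, ψ (f v) = if f = 0 then (Fintype.card V : R) else 0 := by
  simpa [compAddMonoidHom_linearMap_eq_zero_iff hψ] using
    sum_eq_ite (ψ.compAddMonoidHom f.toAddMonoidHom)

lemma sum_apply_linearMap_of_injective {W : Type*} [AddCommGroup W] [Module F W] [DecidableEq W]
    (hψ : ψ ≠ 0) {φ : W →ₗ[F] V →ₗ[F] F} (hφ : Function.Injective φ) (w : W) :
    ∑ v, ψ (φ w v) = if w = 0 then (Fintype.card V : R) else 0 := by
  classical
  simp [sum_apply_linearMap hψ, map_eq_zero_iff φ hφ]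

lemma card_zeros_mul_card_eq_sum {S W : Type*} [Fintype S] [AddCommGroup W] [Module F W]
    (hψ : ψ ≠ 0) {φ : W →ₗ[F] V →ₗ[F] F} (hφ : Function.Injective φ) (f : S → W) :
    (Nat.card {s // f s = 0} : R) * Fintype.card V = ∑ v, ∑ s, ψ (φ (f s) v) := by
  classical
  rw [Finset.sum_comm]
  simp [sum_apply_linearMap_of_injective hψ hφ, Finset.sum_ite, Nat.card_eq_fintype_card,
    Fintype.card_subtype]

end AddChar

section LieAlgebra

variable {F L R : Type*} [Field F] [LieRing L] [LieAlgebra F L] [Fintype L]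
  [CommRing R] {ψ : AddChar F R} {B : L →ₗ[F] L →ₗ[F] F}

lemma sum_addChar_bracket_add_bracket (Z : L) :
    ∑ p : L × L × L × L, ψ (B Z (⁅p.1, p.2.1⁆ + ⁅p.2.2.1, p.2.2.2⁆)) =
      (∑ p : L × L, ψ (B Z ⁅p.1, p.2⁆)) ^ 2 := by
  rw [sq, Finset.sum_mul_sum, ← Fintype.sum_prod_type',
    ← (Equiv.prodAssoc L L (L × L)).sum_comp]
  simp [AddChar.map_add_eq_mul]

variable [IsDomain R]

lemma sum_addChar_bracket_eq_card_mul_card_centralizer (hψ : ψ ≠ 0) (hB : Function.Injective B)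
    (hinv : ∀ X Y Z : L, B ⁅X, Y⁆ Z = B X ⁅Y, Z⁆) (Z : L) :
    ∑ p : L × L, ψ (B Z ⁅p.1, p.2⁆) = Fintype.card L * Nat.card {W : L // ⁅Z, W⁆ = 0} := by
  classical
  simp_rw [Fintype.sum_prod_type, ← hinv, AddChar.sum_apply_linearMap_of_injective hψ hB,
    Finset.sum_ite, Nat.card_eq_fintype_card, Fintype.card_subtype]
  simp [mul_comm]

end LieAlgebra

theorem commutator_double_convolution_zero_fiber_count :
    ∀ (F : Type) [Field F] [Fintype F]
      (L : Type) [LieRing L] [LieAlgebra F L] [Fintype L]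
      (B : L →ₗ[F] L →ₗ[F] F),
      -- nondegeneracy
      (∀ v : L, (∀ w : L, B v w = 0) → v = 0) →
      (∀ v : L, (∀ w : L, B w v = 0) → v = 0) →
      -- invariance
      (∀ X Y Z : L, B ⁅X, Y⁆ Z = B X ⁅Y, Z⁆) →
      Nat.card {p : L × L × L × L // ⁅p.1, p.2.1⁆ + ⁅p.2.2.1, p.2.2.2⁆ = 0} =
        Nat.card L * ∑ Z : L, (Nat.card {W : L // ⁅Z, W⁆ = 0}) ^ 2 := by
  intro F _ _ L _ _ _ B hleft hright hinv
  obtain ⟨ψ, hψ1⟩ := AddChar.exists_apply_ne_zero.2 (one_ne_zero : (1 : F) ≠ 0)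
  have hψ : ψ ≠ 0 := AddChar.ne_zero_iff.2 ⟨1, hψ1⟩
  have hB : Function.Injective B := (injective_iff_map_eq_zero B).2 fun v hv =>
    hleft v fun w => by simp [hv]
  have hBflip : Function.Injective B.flip := (injective_iff_map_eq_zero B.flip).2 fun v hv =>
    hright v fun w => by simpa using LinearMap.congr_fun hv w
  have hcount := AddChar.card_zeros_mul_card_eq_sum hψ hBflip
    fun p : L × L × L × L => ⁅p.1, p.2.1⁆ + ⁅p.2.2.1, p.2.2.2⁆
  simp only [LinearMap.flip_apply, sum_addChar_bracket_add_bracket,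
    sum_addChar_bracket_eq_card_mul_card_centralizer hψ hB hinv] at hcount
  have hcard : (Fintype.card L : ℂ) ≠ 0 := Nat.cast_ne_zero.2 Fintype.card_ne_zero
  have hcount' : (Nat.card {p : L × L × L × L // ⁅p.1, p.2.1⁆ + ⁅p.2.2.1, p.2.2.2⁆ = 0} : ℂ) =
      Fintype.card L * ∑ Z : L, (Nat.card {W : L // ⁅Z, W⁆ = 0} : ℂ) ^ 2 := by
    refine mul_right_cancel₀ hcard (hcount.trans ?_)
    rw [Finset.mul_sum, Finset.sum_mul]
    exact Finset.sum_congr rfl fun Z _ => by ring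
  rw [Nat.card_eq_fintype_card (α := L)]
  exact_mod_cast hcount'
end

section
/- Let 𝔤 be a finite-dimensional Lie algebra over a finite field F_q, equipped with a nondegenerate invariant bilinear form ⟨·,·⟩ (invariant means ⟨[X,Y],Z⟩ = ⟨X,[Y,Z]⟩ for all X,Y,Z ∈ 𝔤), and let ψ be a nontrivial additive character of F_q (a group homomorphism from (F_q,+) to the nonzero complex numbers that is not identically 1). Then for every Z ∈ 𝔤, Σ_{(X,Y) ∈ 𝔤×𝔤} ψ(⟨Z,[X,Y]⟩) = |𝔤| · |C_𝔤(Z)|, where C_𝔤(Z) = {W ∈ 𝔤 : [Z,W] = 0} is the centralizer of Z. -/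
/-!
By invariance, `⟨Z, [X, Y]⟩ = ⟨[Z, X], Y⟩`, so for fixed `X` the inner sum over `Y` is the sum of
the additive character `Y ↦ ψ ⟨[Z, X], Y⟩` of `𝔤`. By nondegeneracy this character is trivial
exactly when `[Z, X] = 0`, so the inner sum is `|𝔤|` for `X ∈ C_𝔤(Z)` and `0` otherwise.
-/

namespace AddChar

variable {A B R : Type*} [AddGroup A] [AddGroup B] [CommMonoid R]

lemma compAddMonoidHom_ne_zero {ψ : AddChar B R} (hψ : ψ ≠ 0) {f : A →+ B}
    (hf : Function.Surjective f) : ψ.compAddMonoidHom f ≠ 0 := by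
  obtain ⟨b, hb⟩ := ne_zero_iff.1 hψ
  obtain ⟨a, rfl⟩ := hf b
  exact ne_zero_iff.2 ⟨a, hb⟩

end AddChar

lemma sum_addChar_comp_linearForm {F M R : Type*} [Field F] [AddCommGroup M] [Module F M]
    [Fintype M] [CommRing R] [IsDomain R] {ψ : AddChar F R} (hψ : ψ ≠ 0) (f : M →ₗ[F] F)
    [Decidable (f = 0)] :
    ∑ m, ψ (f m) = if f = 0 then (Fintype.card M : R) else 0 := by
  split_ifs with hf
  · simp [hf]
  · have hχ : ψ.compAddMonoidHom f.toAddMonoidHom ≠ 0 :=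
      AddChar.compAddMonoidHom_ne_zero hψ (LinearMap.surjective_iff_ne_zero.2 hf)
    simpa [hχ] using AddChar.sum_eq_ite (ψ.compAddMonoidHom f.toAddMonoidHom)

lemma sum_addChar_bilinForm_lie {F L R : Type*} [Field F] [LieRing L] [LieAlgebra F L]
    [Fintype L] [CommRing R] [IsDomain R] {ψ : AddChar F R} (hψ : ψ ≠ 0)
    {B : L →ₗ[F] L →ₗ[F] F} (hB : B.SeparatingLeft)
    (hinv : ∀ X Y Z : L, B ⁅X, Y⁆ Z = B X ⁅Y, Z⁆) (Z X : L) [Decidable (⁅Z, X⁆ = 0)] :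
    ∑ Y, ψ (B Z ⁅X, Y⁆) = if ⁅Z, X⁆ = 0 then (Fintype.card L : R) else 0 := by
  classical
  have hker : B ⁅Z, X⁆ = 0 ↔ ⁅Z, X⁆ = 0 :=
    ⟨fun h ↦ hB _ fun Y ↦ by simp [h], fun h ↦ by simp [h]⟩
  simp only [← hinv, sum_addChar_comp_linearForm hψ, hker]

theorem commutator_character_sum :
    ∀ (F : Type) [Field F] [Fintype F]
      (L : Type) [LieRing L] [LieAlgebra F L] [Fintype L]
      (B : L →ₗ[F] L →ₗ[F] F),
      -- nondegeneracy
      (∀ v : L, (∀ w : L, B v w = 0) → v = 0) →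
      (∀ v : L, (∀ w : L, B w v = 0) → v = 0) →
      -- invariance
      (∀ X Y Z : L, B ⁅X, Y⁆ Z = B X ⁅Y, Z⁆) →
      ∀ (ψ : AddChar F ℂ), (∃ a : F, ψ a ≠ 1) →
      ∀ Z : L,
        (∑ X : L, ∑ Y : L, ψ (B Z ⁅X, Y⁆)) =
          (Nat.card L : ℂ) * (Nat.card {W : L // ⁅Z, W⁆ = 0} : ℂ) := by
  intro F _ _ L _ _ _ B hB _ hinv ψ hψ Z
  classical
  simp only [sum_addChar_bilinForm_lie (AddChar.ne_zero_iff.2 hψ) hB hinv, Finset.sum_ite,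
    Finset.sum_const_zero, add_zero, Finset.sum_const, nsmul_eq_mul, Nat.card_eq_fintype_card,
    Fintype.card_subtype, mul_comm]
end

section
/- Let 𝔤 be a finite-dimensional simple Lie algebra over an algebraically closed field K of characteristic 0, and let w ∈ L_r be a Lie algebra word such that the word map φ_w : 𝔤^r → 𝔤 is not identically zero. Then the K-linear span of the image φ_w(𝔤^r) is all of 𝔤 (in particular, φ_w is a generating morphism). -/
/-!
The span `V` of the image of `φ_w` is stable under every derivation `D` of `𝔤`, in particular
under every `ad x`, so it is an ideal; as it contains a nonzero value it is all of `𝔤`.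

For the stability, evaluate `w` at the polynomial point `y + X • D y` of `K[X] ⊗ 𝔤`. Its
evaluations at `t ∈ K` are the values `φ_w(y + t • D y) ∈ V`, so over the infinite field `K`
all its coefficients lie in `V`. Its `X`-coefficient is read off after `X ↦ ε` in the dual
numbers, where `a ↦ a + ε • D a` is a Lie algebra morphism, and hence equals `D (φ_w y)`.
-/

/-- The word map `φ_w : 𝔤^r → 𝔤` associated to a Lie algebra word `w ∈ L_r`. -/
noncomputable def lieWordMap {K : Type} [CommRing K] {r : ℕ}
    (w : FreeLieAlgebra K (Fin r)) {L : Type} [LieRing L] [LieAlgebra K L]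
    (y : Fin r → L) : L :=
  FreeLieAlgebra.lift K y w

open scoped TensorProduct
open Polynomial

section Contraction

variable {K A B M N : Type*} [CommRing K] [AddCommGroup A] [Module K A] [AddCommGroup B]
  [Module K B] [AddCommGroup M] [Module K M] [AddCommGroup N] [Module K N]

/-- With `A = K[X]`, `A ⊗[K] M` models `M`-valued polynomials, and contracting with `aeval t`
or `lcoeff K n` evaluates at `t` or extracts the `n`-th coefficient. -/
noncomputable def tensorContract (ℓ : A →ₗ[K] K) : A ⊗[K] M →ₗ[K] M :=
  TensorProduct.lift ((LinearMap.lsmul K M).comp ℓ)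

@[simp] theorem tensorContract_tmul (ℓ : A →ₗ[K] K) (a : A) (m : M) :
    tensorContract ℓ (a ⊗ₜ[K] m) = ℓ a • m := rfl

theorem map_tensorContract (f : M →ₗ[K] N) (ℓ : A →ₗ[K] K) (Φ : A ⊗[K] M) :
    f (tensorContract ℓ Φ) = tensorContract ℓ (f.lTensor A Φ) := by
  induction Φ with
  | zero => simp
  | tmul a m => simp
  | add Φ Ψ hΦ hΨ => simp only [map_add, hΦ, hΨ]

theorem tensorContract_rTensor (ℓ : B →ₗ[K] K) (φ : A →ₗ[K] B) (Φ : A ⊗[K] M) :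
    tensorContract ℓ (φ.rTensor M Φ) = tensorContract (ℓ ∘ₗ φ) Φ := by
  induction Φ with
  | zero => simp
  | tmul a m => simp
  | add Φ Ψ hΦ hΨ => simp only [map_add, hΦ, hΨ]

theorem tensorContract_eq_apply_rid (ℓ : A →ₗ[K] K) (Ψ : A ⊗[K] K) :
    tensorContract ℓ Ψ = ℓ (TensorProduct.rid K A Ψ) := by
  induction Ψ with
  | zero => simp
  | tmul a c => simp [mul_comm]
  | add Φ Ψ hΦ hΨ => simp only [map_add, hΦ, hΨ]

end Contraction

section PolynomialCoefficients

variable {K M : Type*} [Field K] [Infinite K] [AddCommGroup M] [Module K M]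

theorem tensorContract_lcoeff_eq_zero {Φ : K[X] ⊗[K] M}
    (h : ∀ t : K, tensorContract (aeval t).toLinearMap Φ = 0) (n : ℕ) :
    tensorContract (lcoeff K n) Φ = 0 := by
  rw [← Module.forall_dual_apply_eq_zero_iff K]
  intro f
  set p : K[X] := TensorProduct.rid K K[X] (f.lTensor K[X] Φ)
  have hcontract (ℓ : K[X] →ₗ[K] K) : f (tensorContract ℓ Φ) = ℓ p := by
    rw [map_tensorContract, tensorContract_eq_apply_rid]
  have hp : p = 0 := Polynomial.funext fun t => by
    simpa [hcontract] using congrArg f (h t)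
  simpa [hp] using hcontract (lcoeff K n)

theorem tensorContract_lcoeff_mem (V : Submodule K M) {Φ : K[X] ⊗[K] M}
    (h : ∀ t : K, tensorContract (aeval t).toLinearMap Φ ∈ V) (n : ℕ) :
    tensorContract (lcoeff K n) Φ ∈ V := by
  rw [← Submodule.Quotient.mk_eq_zero, ← Submodule.mkQ_apply, map_tensorContract]
  refine tensorContract_lcoeff_eq_zero (fun t => ?_) n
  rw [← map_tensorContract, Submodule.mkQ_apply, Submodule.Quotient.mk_eq_zero]
  exact h t

end PolynomialCoefficients

section LieTensor

variable {K A B L M : Type*} [CommRing K] [CommRing A] [Algebra K A] [CommRing B] [Algebra K B]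
  [LieRing L] [LieAlgebra K L] [LieRing M] [LieAlgebra K M]

def lieHomOfBracketTmul (F : A ⊗[K] L →ₗ[K] M)
    (h : ∀ (p : A) (a : L) (q : A) (b : L),
      F ⁅p ⊗ₜ[K] a, q ⊗ₜ[K] b⁆ = ⁅F (p ⊗ₜ[K] a), F (q ⊗ₜ[K] b)⁆) :
    A ⊗[K] L →ₗ⁅K⁆ M where
  __ := F
  map_lie' {x y} := by
    induction x with
    | zero => simp
    | tmul p a =>
      induction y with
      | zero => simp
      | tmul q b => exact h p a q b
      | add u v hu hv => simp_all [lie_add]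
    | add u v hu hv => simp_all [add_lie]

noncomputable def rTensorLieHom (φ : A →ₐ[K] B) : A ⊗[K] L →ₗ⁅K⁆ B ⊗[K] L :=
  lieHomOfBracketTmul (φ.toLinearMap.rTensor L) fun p a q b => by
    simp [LieAlgebra.ExtendScalars.bracket_tmul]

theorem rTensorLieHom_apply (φ : A →ₐ[K] B) (Φ : A ⊗[K] L) :
    rTensorLieHom φ Φ = φ.toLinearMap.rTensor L Φ := rfl

noncomputable def contractLieHom (χ : A →ₐ[K] K) : A ⊗[K] L →ₗ⁅K⁆ L :=
  lieHomOfBracketTmul (tensorContract χ.toLinearMap) fun p a q b => by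
    simp [LieAlgebra.ExtendScalars.bracket_tmul, mul_smul, smul_comm (χ p)]

@[simp] theorem contractLieHom_tmul (χ : A →ₐ[K] K) (p : A) (a : L) :
    contractLieHom χ (p ⊗ₜ[K] a) = χ p • a := rfl

end LieTensor

namespace LieDerivation

variable {K B L : Type*} [CommRing K] [CommRing B] [Algebra K B] [LieRing L] [LieAlgebra K L]

noncomputable def firstOrderExp (D : LieDerivation K L L) {e : B} (he : e * e = 0) :
    L →ₗ⁅K⁆ B ⊗[K] L where
  toLinearMap := TensorProduct.mk K B L 1 + TensorProduct.mk K B L e ∘ₗ D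
  map_lie' {a b} := by
    simp only [LinearMap.toFun_eq_coe, LinearMap.add_apply, LinearMap.coe_comp,
      Function.comp_apply, TensorProduct.mk_apply, coeFn_coe, add_lie, lie_add,
      LieAlgebra.ExtendScalars.bracket_tmul, one_mul, mul_one, he, TensorProduct.zero_tmul,
      add_zero, apply_lie_eq_add, TensorProduct.tmul_add]
    abel

@[simp] theorem firstOrderExp_apply (D : LieDerivation K L L) {e : B} (he : e * e = 0) (a : L) :
    D.firstOrderExp he a = (1 : B) ⊗ₜ[K] a + e ⊗ₜ[K] D a := rfl

end LieDerivation

theorem DualNumber.snd_aeval_eps {K : Type*} [CommRing K] (p : K[X]) :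
    (aeval (DualNumber.eps : DualNumber K) p).snd = p.coeff 1 := by
  have h := aeval_add_of_sq_eq_zero p (algebraMap K (DualNumber K) 0) DualNumber.eps
    (by simp [sq])
  rw [map_zero, zero_add] at h
  rw [h, ← map_zero (algebraMap K (DualNumber K)), aeval_algebraMap_apply, aeval_algebraMap_apply]
  simp [TrivSqZeroExt.algebraMap_eq_inl, ← coeff_zero_eq_eval_zero, coeff_derivative]

theorem lieWordMap_comp {K : Type} [CommRing K] {r : ℕ} (w : FreeLieAlgebra K (Fin r))
    {L M : Type} [LieRing L] [LieAlgebra K L] [LieRing M] [LieAlgebra K M]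
    (g : L →ₗ⁅K⁆ M) (y : Fin r → L) :
    lieWordMap w (g ∘ y) = g (lieWordMap w y) := by
  have : FreeLieAlgebra.lift K (g ∘ y) = g.comp (FreeLieAlgebra.lift K y) :=
    FreeLieAlgebra.hom_ext fun i => by simp
  exact LieHom.congr_fun this w

theorem LieDerivation.apply_lieWordMap_mem_span {K : Type} [Field K] [Infinite K] {r : ℕ}
    (w : FreeLieAlgebra K (Fin r)) {L : Type} [LieRing L] [LieAlgebra K L]
    (D : LieDerivation K L L) (y : Fin r → L) :
    D (lieWordMap w y) ∈ Submodule.span K (Set.range (lieWordMap (L := L) w)) := by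
  set Φ : K[X] ⊗[K] L := lieWordMap w fun i => (1 : K[X]) ⊗ₜ[K] y i + X ⊗ₜ[K] D (y i)
  have heval (t : K) :
      tensorContract (aeval t).toLinearMap Φ = lieWordMap w fun i => y i + t • D (y i) := by
    change contractLieHom (aeval t) Φ = _
    rw [← lieWordMap_comp]
    congr 1
    ext i
    simp
  have hcoeff : tensorContract (lcoeff K 1) Φ = D (lieWordMap w y) := calc
    tensorContract (lcoeff K 1) Φ
        = tensorContract (TrivSqZeroExt.sndHom K K)
            (rTensorLieHom (aeval DualNumber.eps) Φ) := by
      rw [rTensorLieHom_apply, tensorContract_rTensor]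
      congr 2
      exact LinearMap.ext fun p => (DualNumber.snd_aeval_eps p).symm
    _ = tensorContract (TrivSqZeroExt.sndHom K K)
          (D.firstOrderExp DualNumber.eps_mul_eps (lieWordMap w y)) := by
      rw [← lieWordMap_comp, ← lieWordMap_comp]
      congr 2
      ext i
      simp [rTensorLieHom_apply]
    _ = D (lieWordMap w y) := by simp
  rw [← hcoeff]
  exact tensorContract_lcoeff_mem _ (fun t => heval t ▸ Submodule.subset_span ⟨_, rfl⟩) 1

section SpanIdeal

variable {K : Type} [Field K] [Infinite K] {r : ℕ} (w : FreeLieAlgebra K (Fin r))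
  {L : Type} [LieRing L] [LieAlgebra K L]

theorem lie_mem_span_range_lieWordMap (x : L) {m : L}
    (hm : m ∈ Submodule.span K (Set.range (lieWordMap (L := L) w))) :
    ⁅x, m⁆ ∈ Submodule.span K (Set.range (lieWordMap (L := L) w)) := by
  have hle : Submodule.span K (Set.range (lieWordMap (L := L) w)) ≤
      (Submodule.span K (Set.range (lieWordMap w))).comap (LieAlgebra.ad K L x) :=
    Submodule.span_le.mpr <| Set.range_subset_iff.mpr fun y => by
      simpa using (LieDerivation.ad K L x).apply_lieWordMap_mem_span w y
  exact hle hm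

noncomputable def lieWordMapSpan : LieIdeal K L where
  __ := Submodule.span K (Set.range (lieWordMap (L := L) w))
  lie_mem := lie_mem_span_range_lieWordMap w _

end SpanIdeal

theorem lie_word_map_span_image_eq_top :
    ∀ (K : Type) [Field K] [CharZero K]
      (L : Type) [LieRing L] [LieAlgebra K L] [Module.Finite K L],
      LieAlgebra.IsSimple K L →
      ∀ (r : ℕ) (w : FreeLieAlgebra K (Fin r)),
      (∃ y : Fin r → L, lieWordMap w y ≠ 0) →
      Submodule.span K (Set.range fun y : Fin r → L => lieWordMap w y) = ⊤ := by
  intro K _ _ L _ _ _ hsimple r w ⟨y, hy⟩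
  have hne : lieWordMapSpan w ≠ (⊥ : LieIdeal K L) := by
    intro hbot
    have hmem : lieWordMap w y ∈ lieWordMapSpan w := Submodule.subset_span ⟨y, rfl⟩
    exact hy (by simpa [hbot] using hmem)
  have htop := (hsimple.eq_bot_or_eq_top _).resolve_left hne
  exact congrArg LieSubmodule.toSubmodule htop
end

section
/- Let K be an algebraically closed field and n ≥ 1. For A, B ∈ M_n(K) write U(A) for the block matrix [[I_n, A],[0, I_n]] and L(B) for [[I_n, 0],[B, I_n]] in SL_{2n}(K). Then every g ∈ SL_{2n}(K) can be written as a product of 13 such matrices with alternating types starting with an upper one: there exist A_1,…,A_7, B_1,…,B_6 ∈ M_n(K) with g = U(A_1)·L(B_1)·U(A_2)·L(B_2)·⋯·L(B_6)·U(A_7). -/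
/-!
Multiplying `g` on the left by a lower unipotent `L(B₀)` makes its lower-left block `R`
invertible: the left block column `(P; R)` of `g` is injective, and then some `R + B₀ P` is
invertible. For invertible `R` and any invertible `M`, one step of block Gaussian elimination
gives `g = U(A) L(B) [[M, Q], [0, S]]` with `S⁻¹ = -r M R⁻¹`, where `r` is the lower-left block
of `g⁻¹`.

The Weyl elements `w(X) = U(X) L(-X⁻¹) U(X) = [[0, X], [-X⁻¹, 0]]` satisfy
`w(X) w(Y) = diag(-X Y⁻¹, -X⁻¹ Y)`, so `diag(M, S)` is a product `U L U L U` as soon as `S⁻¹` is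
conjugate to `M`. Writing `M = R⁻¹ Y R`, this asks for an invertible `Y` with `E Y` conjugate to
`Y`, where `E = -r R⁻¹` has determinant one. Over an algebraically closed field such a `Y` exists:
conjugate `E` to an upper triangular `T` and pick pairwise distinct `dᵢ` and a permutation `σ`
with `d_{σ i} = Tᵢᵢ dᵢ`; then `T diag(d)` is triangular with distinct diagonal entries
`d_{σ i}`, hence conjugate to `diag(d ∘ σ)` and so to `diag(d)`.

Altogether `g = L(-B₀) U L U L U L U`, which is 8 of the 13 allowed factors.
-/

open Matrix Finset

section PermMultiplier

variable {G : Type*} [CommGroup G]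

/-- For matrices this makes `diagonal (l * d)` a permutation of `diagonal d`, whose entries are
pairwise distinct. -/
def IsPermMultiplier {ι : Type*} (l : ι → G) : Prop :=
  ∃ (d : ι → G) (σ : Equiv.Perm ι), Function.Injective d ∧ ∀ i, d (σ i) = l i * d i

theorem IsPermMultiplier.of_comp_equiv {α β : Type*} (e : α ≃ β) {l : β → G}
    (h : IsPermMultiplier (l ∘ e)) : IsPermMultiplier l := by
  obtain ⟨d, σ, hd, hσ⟩ := h
  refine ⟨d ∘ e.symm, e.permCongr σ, hd.comp e.symm.injective, fun i => ?_⟩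
  simpa using hσ (e.symm i)

theorem IsPermMultiplier.sumElim [Infinite G] {α β : Type*} [Finite α] [Finite β]
    {l₁ : α → G} {l₂ : β → G} (h₁ : IsPermMultiplier l₁) (h₂ : IsPermMultiplier l₂) :
    IsPermMultiplier (Sum.elim l₁ l₂) := by
  obtain ⟨d₁, σ₁, hd₁, hσ₁⟩ := h₁
  obtain ⟨d₂, σ₂, hd₂, hσ₂⟩ := h₂
  obtain ⟨t, ht⟩ : ∃ t : G, ∀ a b, d₁ a ≠ t * d₂ b := by
    have : (Set.range fun ab : α × β => d₁ ab.1 * (d₂ ab.2)⁻¹).Finite := Set.finite_range _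
    obtain ⟨t, ht⟩ := this.infinite_compl.nonempty
    exact ⟨t, fun a b hab => ht ⟨(a, b), by simp [hab]⟩⟩
  refine ⟨Sum.elim d₁ (t * d₂ ·), Equiv.sumCongr σ₁ σ₂, ?_, ?_⟩
  · rintro (a | b) (a' | b') h
    · simp [hd₁ h]
    · exact absurd h (ht a b')
    · exact absurd h.symm (ht a' b)
    · simp [hd₂ (mul_left_cancel h)]
  · rintro (a | b)
    · simp [hσ₁]
    · simp [hσ₂, mul_left_comm]

/-- A single cycle: `d k` is the partial product `l 0 * ⋯ * l (k - 1)`. -/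
theorem isPermMultiplier_of_prod_Ico_ne_one {N : ℕ} (l : Fin N → G) (hprod : ∏ i, l i = 1)
    (hIco : ∀ j k : Fin N, j < k → ∏ i ∈ Ico j k, l i ≠ 1) : IsPermMultiplier l := by
  set a : ℕ → G := fun i => if h : i < N then l ⟨i, h⟩ else 1
  set P : ℕ → G := fun k => ∏ i ∈ range k, a i
  have hP : ∀ j k : ℕ, j ≤ k → P k = P j * ∏ i ∈ Ico j k, a i := fun j k hjk =>
    (prod_range_mul_prod_Ico a hjk).symm
  have hlIco : ∀ j k : Fin N, ∏ i ∈ Ico j k, l i = ∏ i ∈ Ico (j : ℕ) k, a i := by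
    intro j k
    rw [← Fin.map_valEmbedding_Ico, prod_map]
    simp [a]
  refine ⟨fun k => P k, finRotate N, ?_, ?_⟩
  · intro j k hjk
    by_contra hne
    wlog hlt : j < k generalizing j k
    · exact this hjk.symm (Ne.symm hne) (lt_of_le_of_ne (not_lt.mp hlt) (Ne.symm hne))
    refine hIco j k hlt ?_
    rw [hlIco]
    simpa [hP j k hlt.le] using hjk.symm
  · intro k
    obtain _ | N := N
    · exact k.elim0
    show P (finRotate _ k) = l k * P k
    rcases eq_or_ne k (Fin.last N) with rfl | hk
    · have hPN : P (N + 1) = 1 := by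
        show ∏ i ∈ range (N + 1), a i = 1
        rw [← hprod, ← Fin.prod_univ_eq_prod_range]
        simp [a, Fin.is_le]
      calc P (finRotate _ (Fin.last N)) = P (N + 1) := by simp [hPN, P]
        _ = P N * a N := by rw [hP N (N + 1) N.le_succ, Nat.Ico_succ_singleton, prod_singleton]
        _ = l (Fin.last N) * P N := by simp only [a, dif_pos N.lt_succ_self]; exact mul_comm _ _
    · rw [coe_finRotate_of_ne_last hk, hP k (k + 1) (by omega), Nat.Ico_succ_singleton,
        prod_singleton]
      simp only [a, dif_pos k.isLt, Fin.eta]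
      exact mul_comm _ _

theorem isPermMultiplier_of_prod_eq_one [Infinite G] {ι : Type*} [Fintype ι] (l : ι → G)
    (hprod : ∏ i, l i = 1) : IsPermMultiplier l := by
  induction hN : Fintype.card ι using Nat.strong_induction_on generalizing ι with
  | _ N ih =>
  classical
  by_cases hsplit : ∃ s : Finset ι, s.Nonempty ∧ s ≠ univ ∧ ∏ i ∈ s, l i = 1
  · obtain ⟨s, hne, hs, hsprod⟩ := hsplit
    have hcompl : ∏ i ∈ sᶜ, l i = 1 := by
      rwa [← prod_mul_prod_compl s l, hsprod, one_mul] at hprod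
    refine .of_comp_equiv (Equiv.sumCompl (· ∈ s)) ?_
    have hcomp : l ∘ Equiv.sumCompl (· ∈ s) =
        Sum.elim (fun i : s => l i) (fun i : {i // i ∉ s} => l i) := by
      ext (i | i) <;> rfl
    rw [hcomp]
    refine .sumElim (ih _ ?_ _ ?_ rfl) (ih _ ?_ _ ?_ rfl)
    · obtain ⟨x, hx⟩ : ∃ x, x ∉ s := by simpa [eq_univ_iff_forall] using hs
      exact hN ▸ Fintype.card_subtype_lt hx
    · exact (prod_subtype s (fun _ => Iff.rfl) l).symm.trans hsprod
    · obtain ⟨x, hx⟩ := hne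
      exact hN ▸ Fintype.card_subtype_lt (not_not.mpr hx)
    · exact (prod_subtype sᶜ (fun _ => mem_compl) l).symm.trans hcompl
  · push Not at hsplit
    set e := (Fintype.equivFin ι).symm
    refine .of_comp_equiv e <|
      isPermMultiplier_of_prod_Ico_ne_one _ ((e.prod_comp l).trans hprod) fun j k hjk => ?_
    have hmap := prod_map (Ico j k) e.toEmbedding l
    rw [Equiv.coe_toEmbedding] at hmap
    rw [Function.comp_def, ← hmap]
    refine hsplit _ ⟨e j, by simp [hjk]⟩ fun h => ?_
    have hk : e k ∈ (Ico j k).map e.toEmbedding := h ▸ mem_univ _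
    simp at hk

end PermMultiplier

theorem isConj_units_conj {α : Type*} [Monoid α] (u : αˣ) (a : α) : IsConj a (u * a * ↑u⁻¹) :=
  ⟨u, by simp [SemiconjBy, mul_assoc]⟩

instance {K : Type*} [Field K] [Infinite K] : Infinite Kˣ :=
  have : Infinite ({0}ᶜ : Set K) := (Set.finite_singleton 0).infinite_compl.to_subtype
  Infinite.of_injective (fun x : ({0}ᶜ : Set K) => Units.mk0 x.1 x.2)
    fun _ _ h => Subtype.ext (congr_arg Units.val h)

namespace LinearMap

variable {K V W U : Type*} [Field K] [AddCommGroup V] [Module K V] [AddCommGroup W] [Module K W]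
  [AddCommGroup U] [Module K U]

theorem exists_comp_eq_of_ker_le (f : V →ₗ[K] W) (g : V →ₗ[K] U) (h : ker f ≤ ker g) :
    ∃ β : W →ₗ[K] U, β ∘ₗ f = g := by
  obtain ⟨β, hβ⟩ := LinearMap.exists_extend
    ((ker f).liftQ g h ∘ₗ f.quotKerEquivRange.symm.toLinearMap)
  refine ⟨β, LinearMap.ext fun x => ?_⟩
  have hx : f.quotKerEquivRange.symm (f.rangeRestrict x) = (ker f).mkQ x :=
    f.quotKerEquivRange.symm_apply_eq.mpr rfl
  simpa [hx] using LinearMap.congr_fun hβ (f.rangeRestrict x)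

/-- Stable rank one: `e` extends `g` restricted to `ker f`, and `e - g` factors through `f`. -/
theorem exists_add_comp_eq_linearEquiv [FiniteDimensional K V] (f g : V →ₗ[K] V)
    (h : Disjoint (ker f) (ker g)) : ∃ (β : V →ₗ[K] V) (e : V ≃ₗ[K] V), g + β ∘ₗ f = e := by
  have hinj : Function.Injective (g ∘ₗ (ker f).subtype) := by
    rw [← LinearMap.ker_eq_bot, LinearMap.ker_comp, ← Submodule.disjoint_iff_comap_eq_bot]
    exact h
  obtain ⟨e, he⟩ := Submodule.exists_linearEquiv_restrict_eq (LinearEquiv.ofInjective _ hinj)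
  obtain ⟨β, hβ⟩ := exists_comp_eq_of_ker_le f (e.toLinearMap - g) fun x hx => by
    simpa [sub_eq_zero] using (he ⟨x, hx⟩).symm
  exact ⟨β, e, by rw [hβ, add_sub_cancel]⟩

end LinearMap

namespace Matrix

@[simp] theorem toBlocks₂₁_one {R m n : Type*} [Zero R] [One R] [DecidableEq m]
    [DecidableEq n] : (1 : Matrix (m ⊕ n) (m ⊕ n) R).toBlocks₂₁ = 0 := by
  rw [← fromBlocks_one, toBlocks_fromBlocks₂₁]

@[simp] theorem toBlocks₂₂_one {R m n : Type*} [Zero R] [One R] [DecidableEq m]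
    [DecidableEq n] : (1 : Matrix (m ⊕ n) (m ⊕ n) R).toBlocks₂₂ = 1 := by
  rw [← fromBlocks_one, toBlocks_fromBlocks₂₂]

theorem toBlocks₂₁_mul {R l m n o p q : Type*} [NonUnitalNonAssocSemiring R] [Fintype l]
    [Fintype m] (X : Matrix (n ⊕ o) (l ⊕ m) R) (Y : Matrix (l ⊕ m) (p ⊕ q) R) :
    (X * Y).toBlocks₂₁ = X.toBlocks₂₁ * Y.toBlocks₁₁ + X.toBlocks₂₂ * Y.toBlocks₂₁ := by
  conv_lhs => rw [← fromBlocks_toBlocks X, ← fromBlocks_toBlocks Y, fromBlocks_multiply]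
  rfl

theorem toBlocks₂₂_mul {R l m n o p q : Type*} [NonUnitalNonAssocSemiring R] [Fintype l]
    [Fintype m] (X : Matrix (n ⊕ o) (l ⊕ m) R) (Y : Matrix (l ⊕ m) (p ⊕ q) R) :
    (X * Y).toBlocks₂₂ = X.toBlocks₂₁ * Y.toBlocks₁₂ + X.toBlocks₂₂ * Y.toBlocks₂₂ := by
  conv_lhs => rw [← fromBlocks_toBlocks X, ← fromBlocks_toBlocks Y, fromBlocks_multiply]
  rfl

theorem exists_isConj_fromBlocks_of_toBlocks₂₁_eq_zero {R m n : Type*} [Semiring R]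
    [Fintype m] [Fintype n] [DecidableEq m] [DecidableEq n] {Z : Matrix (m ⊕ n) (m ⊕ n) R}
    (hZ : Z.toBlocks₂₁ = 0) {T : Matrix n n R} (hT : IsConj Z.toBlocks₂₂ T) :
    ∃ w, IsConj Z (fromBlocks Z.toBlocks₁₁ w 0 T) := by
  obtain ⟨c, hc⟩ := hT
  let d : (Matrix (m ⊕ n) (m ⊕ n) R)ˣ :=
    ⟨fromBlocks 1 0 0 c, fromBlocks 1 0 0 c⁻¹.val, by simp [fromBlocks_multiply],
      by simp [fromBlocks_multiply]⟩
  refine ⟨Z.toBlocks₁₂ * c⁻¹.val, d, ?_⟩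
  unfold SemiconjBy
  conv_lhs => rw [← fromBlocks_toBlocks Z]
  simp [d, fromBlocks_multiply, hZ, hc.eq, Matrix.mul_assoc]

theorem isConj_submatrix_equiv {R ι : Type*} [Semiring R] [Fintype ι] [DecidableEq ι]
    (M : Matrix ι ι R) (σ : Equiv.Perm ι) : IsConj (M.submatrix σ σ) M :=
  ⟨permMatrixHom.toHomUnits σ, by
    simp [SemiconjBy, PEquiv.toMatrix_toPEquiv_mul, PEquiv.mul_toMatrix_toPEquiv,
      Equiv.Perm.inv_def]⟩

section Field

variable {K : Type*} [Field K]

theorem exists_isUnit_add_mul {m : Type*} [Fintype m] [DecidableEq m] (P R : Matrix m m K)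
    (h : ∀ x, P *ᵥ x = 0 → R *ᵥ x = 0 → x = 0) : ∃ B, IsUnit (R + B * P) := by
  obtain ⟨β, e, he⟩ := LinearMap.exists_add_comp_eq_linearEquiv P.mulVecLin R.mulVecLin
    (Submodule.disjoint_def.mpr fun x hP hR => h x hP hR)
  refine ⟨LinearMap.toMatrix' β, mulVec_injective_iff_isUnit.mp fun x y hxy => e.injective ?_⟩
  have key : ∀ z, (R + LinearMap.toMatrix' β * P) *ᵥ z = e z := fun z => by
    simpa [add_mulVec, ← mulVec_mulVec] using LinearMap.congr_fun he z
  rwa [← key, ← key]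

theorem exists_isUnit_mulVec_single_eq {ι : Type*} [Fintype ι] [DecidableEq ι] {v : ι → K}
    (hv : v ≠ 0) (i : ι) : ∃ C : Matrix ι ι K, IsUnit C ∧ C *ᵥ Pi.single i 1 = v := by
  have hi : (Pi.single i 1 : ι → K) ≠ 0 := by simp
  obtain ⟨e, he⟩ := Submodule.exists_linearEquiv_restrict_eq
    ((LinearEquiv.toSpanNonzeroSingleton K _ _ hi).symm ≪≫ₗ
      LinearEquiv.toSpanNonzeroSingleton K _ _ hv)
  have hev : e (Pi.single i 1) = v := by
    have h1 := LinearEquiv.coord_self K _ _ hi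
    rw [LinearEquiv.coord] at h1
    rw [← he ⟨_, Submodule.mem_span_singleton_self _⟩]
    simp [h1]
  have hmulVec : (LinearMap.toMatrix' e.toLinearMap).mulVec = e := funext fun x =>
    LinearMap.toMatrix'_mulVec _ x
  refine ⟨LinearMap.toMatrix' e, mulVec_injective_iff_isUnit.mp ?_, by rw [hmulVec, hev]⟩
  rw [hmulVec]
  exact e.injective

theorem exists_isConj_apply_eq_zero [IsAlgClosed K] {ι : Type*} [Fintype ι] [DecidableEq ι]
    (X : Matrix ι ι K) (i₀ : ι) : ∃ Y, IsConj X Y ∧ ∀ i ≠ i₀, Y i i₀ = 0 := by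
  have : Nonempty ι := ⟨i₀⟩
  obtain ⟨μ, hμ⟩ := Module.End.exists_eigenvalue (toLin' X)
  obtain ⟨v, hv⟩ := hμ.exists_hasEigenvector
  obtain ⟨C, hC, hCv⟩ := exists_isUnit_mulVec_single_eq hv.2 i₀
  set u := hC.unit⁻¹
  refine ⟨_, isConj_units_conj u X, fun i hi => ?_⟩
  have hXv : X *ᵥ v = μ • v := by simpa using hv.apply_eq_smul
  have huC : u.val * C = 1 := hC.unit.inv_mul
  have : (u.val * X * u⁻¹.val) *ᵥ Pi.single i₀ 1 = μ • Pi.single i₀ 1 := by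
    simp only [u, inv_inv, IsUnit.unit_spec]
    rw [← mulVec_mulVec, hCv, ← mulVec_mulVec, hXv, mulVec_smul, ← hCv, mulVec_mulVec, huC,
      one_mulVec]
  simpa [hi] using congr_fun this i

theorem exists_isConj_isUpperTriangular [IsAlgClosed K] :
    ∀ {n : ℕ} (X : Matrix (Fin n) (Fin n) K), ∃ T, IsConj X T ∧ T.IsUpperTriangular
  | 0, X => ⟨X, .refl X, fun i => i.elim0⟩
  | n + 1, X => by
    let e : Fin 1 ⊕ Fin n ≃ Fin (n + 1) := finSumFinEquiv.trans (finCongr (Nat.add_comm 1 n))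
    obtain ⟨Z, hXZ, hZ⟩ := exists_isConj_apply_eq_zero (reindex e.symm e.symm X) (Sum.inl 0)
    obtain ⟨T, hZT, hT⟩ := exists_isConj_isUpperTriangular Z.toBlocks₂₂
    have hZ₂₁ : Z.toBlocks₂₁ = 0 := by
      ext i j
      rw [Subsingleton.elim j 0]
      exact hZ _ (by simp)
    obtain ⟨w, hw⟩ := exists_isConj_fromBlocks_of_toBlocks₂₁_eq_zero hZ₂₁ hZT
    refine ⟨reindex e e (fromBlocks Z.toBlocks₁₁ w 0 T), ?_, ?_⟩
    · simpa using (reindexAlgEquiv K K e).toMonoidHom.map_isConj (hXZ.trans hw)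
    · have he : ∀ i, e (Sum.inl i) = 0 := fun i => Fin.ext (by simp [e, Fin.fin_one_eq_zero])
      rw [IsUpperTriangular, blockTriangular_reindex_iff]
      rintro (i | i) (j | j) hij
      · exact absurd hij (by simp [he])
      · exact absurd hij (by simp [he])
      · rfl
      · exact hT (by simpa [e] using hij)

theorem isConj_diagonal_of_isUpperTriangular {ι : Type*} [Fintype ι] [DecidableEq ι]
    [LinearOrder ι] {T : Matrix ι ι K} (hT : T.IsUpperTriangular)
    (hinj : Function.Injective fun i => T i i) : IsConj T (diagonal fun i => T i i) := by
  have heig : ∀ i, Module.End.HasEigenvalue (toLin' T) (T i i) := fun i => by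
    rw [Module.End.hasEigenvalue_iff_isRoot_charpoly, Matrix.charpoly_toLin',
      charpoly_of_isUpperTriangular _ hT, Polynomial.IsRoot, Polynomial.eval_prod]
    exact prod_eq_zero (mem_univ i) (by simp)
  choose w hw using fun i => (heig i).exists_hasEigenvector
  have hC : IsUnit (of fun i j => w j i) := linearIndependent_cols_iff_isUnit.mp
    (Module.End.eigenvectors_linearIndependent' _ _ hinj w hw)
  refine IsConj.symm ⟨hC.unit, ?_⟩
  ext i j
  have := congr_fun (hw j).apply_eq_smul i
  simp only [toLin'_apply, mulVec, dotProduct, Pi.smul_apply, smul_eq_mul] at this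
  simp only [IsUnit.unit_spec, mul_diagonal]
  simp [mul_apply, this, mul_comm]

theorem exists_isConj_mul_diagonal [Infinite K] {ι : Type*} [Fintype ι] [DecidableEq ι]
    [LinearOrder ι] {T : Matrix ι ι K} (hT : T.IsUpperTriangular) (hdiag : ∏ i, T i i = 1) :
    ∃ D : (Matrix ι ι K)ˣ, IsConj (T * D) D := by
  have hT0 : ∀ i, T i i ≠ 0 := fun i h =>
    zero_ne_one ((prod_eq_zero (f := fun j => T j j) (mem_univ i) h).symm.trans hdiag)
  obtain ⟨d, σ, hd, hσ⟩ := isPermMultiplier_of_prod_eq_one (fun i => Units.mk0 (T i i) (hT0 i))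
    (Units.ext (by simp [hdiag]))
  let D : (Matrix ι ι K)ˣ :=
    ⟨diagonal fun i => (d i : K), diagonal fun i => ↑(d i)⁻¹, by simp, by simp⟩
  have hTD : (fun i => (T * D) i i) = fun i => (d (σ i) : K) := by
    ext i
    simp [D, hσ, mul_comm]
  refine ⟨D, IsConj.trans (b := diagonal fun i => (d (σ i) : K)) ?_ ?_⟩
  · rw [← hTD]
    refine isConj_diagonal_of_isUpperTriangular (hT.mul (blockTriangular_diagonal _)) ?_
    rw [hTD]
    exact (Units.val_injective.comp hd).comp σ.injective
  · simpa [submatrix_diagonal_equiv, Function.comp_def] using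
      isConj_submatrix_equiv (diagonal fun i => (d i : K)) σ

/-- Shoda's theorem: a matrix of determinant one is a commutator `(c⁻¹ Y c) Y⁻¹`. -/
theorem exists_isConj_mul_of_det_eq_one [IsAlgClosed K] {n : ℕ} (E : Matrix (Fin n) (Fin n) K)
    (hE : E.det = 1) : ∃ Y : (Matrix (Fin n) (Fin n) K)ˣ, IsConj (E * Y) Y := by
  obtain ⟨T, ⟨c, hc⟩, hT⟩ := exists_isConj_isUpperTriangular E
  have hET : E = c⁻¹.val * T * c := by rw [mul_assoc, ← hc.eq, Units.inv_mul_cancel_left]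
  obtain ⟨D, hD⟩ := exists_isConj_mul_diagonal hT
    (by rw [← det_of_isUpperTriangular hT, ← hE, hET, det_units_conj'])
  refine ⟨c⁻¹ * D * c, ?_⟩
  have hEY : E * (c⁻¹ * D * c).val = c⁻¹.val * (T * D) * c⁻¹⁻¹.val := by
    simp [hET, mul_assoc]
  rw [hEY]
  exact (isConj_units_conj _ _).symm.trans (hD.trans (by simpa using isConj_units_conj c⁻¹ D.val))

end Field

end Matrix

section BlockUnipotent

variable {m R : Type*} [DecidableEq m] [CommRing R]

def upperUnipotent (A : Matrix m m R) : Matrix (m ⊕ m) (m ⊕ m) R := fromBlocks 1 A 0 1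

def lowerUnipotent (B : Matrix m m R) : Matrix (m ⊕ m) (m ⊕ m) R := fromBlocks 1 0 B 1

@[simp] theorem upperUnipotent_zero : upperUnipotent (0 : Matrix m m R) = 1 := fromBlocks_one

@[simp] theorem lowerUnipotent_zero : lowerUnipotent (0 : Matrix m m R) = 1 := fromBlocks_one

variable [Fintype m]

theorem upperUnipotent_mul_upperUnipotent (A A' : Matrix m m R) :
    upperUnipotent A * upperUnipotent A' = upperUnipotent (A + A') := by
  simp [upperUnipotent, fromBlocks_multiply, add_comm]

theorem lowerUnipotent_mul_lowerUnipotent (B B' : Matrix m m R) :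
    lowerUnipotent B * lowerUnipotent B' = lowerUnipotent (B + B') := by
  simp [lowerUnipotent, fromBlocks_multiply, add_comm]

@[simp] theorem det_upperUnipotent (A : Matrix m m R) : (upperUnipotent A).det = 1 := by
  simp [upperUnipotent]

@[simp] theorem det_lowerUnipotent (B : Matrix m m R) : (lowerUnipotent B).det = 1 := by
  simp [lowerUnipotent]

theorem upperUnipotent_mul_lowerUnipotent_mul_upperUnipotent {X Y : Matrix m m R}
    (hXY : X * Y = 1) (hYX : Y * X = 1) :
    upperUnipotent X * lowerUnipotent (-Y) * upperUnipotent X = fromBlocks 0 X (-Y) 0 := by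
  simp [upperUnipotent, lowerUnipotent, fromBlocks_multiply, hXY, hYX]

theorem fromBlocks_conj_inv_eq_prod (M c : (Matrix m m R)ˣ) :
    fromBlocks M.val 0 0 (c * M⁻¹ * c⁻¹).val =
      upperUnipotent c⁻¹.val * lowerUnipotent (-c.val) *
        upperUnipotent (c⁻¹.val - (M⁻¹ * c⁻¹).val) * lowerUnipotent (c * M).val *
          upperUnipotent (-(M⁻¹ * c⁻¹).val) := by
  have h₁ := upperUnipotent_mul_lowerUnipotent_mul_upperUnipotent c.inv_mul c.mul_inv
  have h₂ := upperUnipotent_mul_lowerUnipotent_mul_upperUnipotent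
    (X := -(M⁻¹ * c⁻¹).val) (Y := -(c * M).val)
    (by rw [neg_mul_neg, ← Units.val_mul, show M⁻¹ * c⁻¹ * (c * M) = 1 by group, Units.val_one])
    (by rw [neg_mul_neg, ← Units.val_mul, show c * M * (M⁻¹ * c⁻¹) = 1 by group, Units.val_one])
  rw [neg_neg] at h₂
  rw [sub_eq_add_neg, ← upperUnipotent_mul_upperUnipotent]
  calc fromBlocks M.val 0 0 (c * M⁻¹ * c⁻¹).val
      = fromBlocks 0 c⁻¹.val (-c.val) 0 * fromBlocks 0 (-(M⁻¹ * c⁻¹).val) (c * M).val 0 := by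
        simp only [fromBlocks_multiply, mul_neg, neg_mul, neg_neg, zero_mul, mul_zero, add_zero,
          zero_add, neg_zero, ← Units.val_mul]
        group
    _ = _ := by rw [← h₁, ← h₂]; simp only [mul_assoc]

theorem lowerUnipotent_mul_upperUnipotent_mul_eq_fromBlocks {g : Matrix (m ⊕ m) (m ⊕ m) R}
    {A B M : Matrix m m R} (hA : A * g.toBlocks₂₁ = g.toBlocks₁₁ - M)
    (hB : B * M = g.toBlocks₂₁) :
    ∃ Q S, lowerUnipotent (-B) * upperUnipotent (-A) * g = fromBlocks M Q 0 S := by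
  set h := lowerUnipotent (-B) * upperUnipotent (-A) * g
  refine ⟨h.toBlocks₁₂, h.toBlocks₂₂, (fromBlocks_toBlocks h).symm.trans ?_⟩
  congr 1
  all_goals
    simp only [h]
    conv_lhs => rw [← fromBlocks_toBlocks g]
    simp only [upperUnipotent, lowerUnipotent, fromBlocks_multiply, toBlocks_fromBlocks₁₁,
      toBlocks_fromBlocks₂₁, Matrix.one_mul, Matrix.zero_mul, add_zero]
  · rw [Matrix.neg_mul, hA]
    abel
  · calc _ = B * (A * g.toBlocks₂₁) - B * g.toBlocks₁₁ + g.toBlocks₂₁ := by noncomm_ring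
      _ = 0 := by rw [hA, ← mul_sub, sub_sub_cancel_left, mul_neg, hB, neg_add_cancel]

theorem exists_eq_upperUnipotent_mul_lowerUnipotent_mul_fromBlocks
    {g : Matrix (m ⊕ m) (m ⊕ m) R} (hg : IsUnit g.det) (R₀ M : (Matrix m m R)ˣ)
    (hR₀ : g.toBlocks₂₁ = R₀.val) :
    ∃ A B Q S, g = upperUnipotent A * lowerUnipotent B * fromBlocks M.val Q 0 S ∧
      S * (-(g⁻¹.toBlocks₂₁ * (M * R₀⁻¹).val)) = 1 := by
  set A := (g.toBlocks₁₁ - M.val) * R₀⁻¹.val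
  set B := (R₀ * M⁻¹).val
  obtain ⟨Q, S, hh⟩ := lowerUnipotent_mul_upperUnipotent_mul_eq_fromBlocks (g := g) (A := A)
    (B := B) (by rw [hR₀, mul_assoc, Units.inv_mul, mul_one])
    (by rw [hR₀, ← Units.val_mul, inv_mul_cancel_right])
  refine ⟨A, B, Q, S, ?_, ?_⟩
  · rw [← hh, ← mul_assoc, ← mul_assoc, mul_assoc _ (lowerUnipotent B),
      lowerUnipotent_mul_lowerUnipotent, add_neg_cancel, lowerUnipotent_zero, mul_one,
      upperUnipotent_mul_upperUnipotent, add_neg_cancel, upperUnipotent_zero, one_mul]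
  have hinv : fromBlocks M.val Q 0 S * (g⁻¹ * upperUnipotent A * lowerUnipotent B) = 1 := by
    rw [← hh]
    simp only [mul_assoc]
    rw [← mul_assoc g, mul_nonsing_inv g hg, Matrix.one_mul, ← mul_assoc (upperUnipotent (-A)),
      upperUnipotent_mul_upperUnipotent, neg_add_cancel, upperUnipotent_zero, Matrix.one_mul,
      lowerUnipotent_mul_lowerUnipotent, neg_add_cancel, lowerUnipotent_zero]
  have hs : g⁻¹.toBlocks₂₂ = -(g⁻¹.toBlocks₂₁ * g.toBlocks₁₁) * R₀⁻¹.val := by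
    have hrs : g⁻¹.toBlocks₂₁ * g.toBlocks₁₁ + g⁻¹.toBlocks₂₂ * R₀ = 0 := by
      simpa [toBlocks₂₁_mul, hR₀] using congr_arg toBlocks₂₁ (nonsing_inv_mul g hg)
    rw [← eq_neg_of_add_eq_zero_right hrs, mul_assoc, Units.mul_inv, Matrix.mul_one]
  have hS : S * (g⁻¹.toBlocks₂₁ * A + g⁻¹.toBlocks₂₂) = 1 := by
    simpa [toBlocks₂₂_mul, toBlocks₂₁_mul, upperUnipotent, lowerUnipotent] using
      congr_arg toBlocks₂₂ hinv
  rw [← hS, hs, Units.val_mul]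
  congr 1
  simp only [A]
  noncomm_ring

theorem exists_fromBlocks_eq_prod_of_isConj {M : (Matrix m m R)ˣ} {Q S N : Matrix m m R}
    (hSN : S * N = 1) (hNM : IsConj N M) :
    ∃ A : Fin 3 → Matrix m m R, ∃ B : Fin 2 → Matrix m m R,
      fromBlocks M.val Q 0 S = upperUnipotent (A 0) * lowerUnipotent (B 0) *
        upperUnipotent (A 1) * lowerUnipotent (B 1) * upperUnipotent (A 2) := by
  obtain ⟨c, hc⟩ := hNM
  have hN : N = (c⁻¹ * M * c).val := by
    rw [Units.val_mul, Units.val_mul, mul_assoc, ← hc.eq, Units.inv_mul_cancel_left]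
  have hS : S = (c⁻¹ * M⁻¹ * c⁻¹⁻¹).val := by
    rw [hN] at hSN
    rw [Units.eq_inv_of_mul_eq_one_right hSN]
    congr 1
    group
  have hsplit : fromBlocks M.val Q 0 S = fromBlocks M.val 0 0 S * upperUnipotent (M⁻¹.val * Q) := by
    simp [upperUnipotent, fromBlocks_multiply]
  rw [hsplit, hS, fromBlocks_conj_inv_eq_prod, mul_assoc _ (upperUnipotent _),
    upperUnipotent_mul_upperUnipotent]
  exact ⟨![_, _, _], ![_, _], rfl⟩

end BlockUnipotent

theorem exists_isUnit_toBlocks₂₁_lowerUnipotent_mul {K m : Type*} [Field K] [Fintype m]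
    [DecidableEq m] {g : Matrix (m ⊕ m) (m ⊕ m) K} (hg : IsUnit g) :
    ∃ B, IsUnit (lowerUnipotent B * g).toBlocks₂₁ := by
  have hker : ∀ x, g.toBlocks₁₁ *ᵥ x = 0 → g.toBlocks₂₁ *ᵥ x = 0 → x = 0 := by
    intro x h₁ h₂
    have : g *ᵥ Sum.elim x 0 = g *ᵥ 0 := by
      rw [← fromBlocks_toBlocks g, fromBlocks_mulVec]
      simp [h₁, h₂]
    funext i
    simpa using congr_fun (mulVec_injective_iff_isUnit.mpr hg this) (Sum.inl i)
  obtain ⟨B, hB⟩ := exists_isUnit_add_mul _ _ hker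
  refine ⟨B, ?_⟩
  rw [← fromBlocks_toBlocks g]
  simpa [lowerUnipotent, fromBlocks_multiply, add_comm] using hB

theorem exists_eq_prod_seven_of_isUnit_toBlocks₂₁ {K : Type*} [Field K] [IsAlgClosed K] {n : ℕ}
    {g : Matrix (Fin n ⊕ Fin n) (Fin n ⊕ Fin n) K} (hg : g.det = 1) (hR : IsUnit g.toBlocks₂₁) :
    ∃ A : Fin 4 → Matrix (Fin n) (Fin n) K, ∃ B : Fin 3 → Matrix (Fin n) (Fin n) K,
      g = upperUnipotent (A 0) * lowerUnipotent (B 0) * upperUnipotent (A 1) *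
        lowerUnipotent (B 1) * upperUnipotent (A 2) * lowerUnipotent (B 2) *
          upperUnipotent (A 3) := by
  have hg' : IsUnit g.det := hg ▸ isUnit_one
  set R₀ := hR.unit
  set E := -(g⁻¹.toBlocks₂₁ * R₀⁻¹.val)
  -- for `M = 1` the Gauss step exhibits `E` as the inverse of a block `S` with `det S = det g`
  have hE : E.det = 1 := by
    obtain ⟨_, _, _, S, hgQS, hS⟩ :=
      exists_eq_upperUnipotent_mul_lowerUnipotent_mul_fromBlocks hg' R₀ 1 hR.unit_spec.symm
    have hdetS : S.det = 1 := by
      simpa [hg, det_fromBlocks_zero₂₁] using (congr_arg det hgQS).symm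
    have := congr_arg det hS
    rw [det_mul, hdetS, one_mul, det_one] at this
    simpa [E] using this
  obtain ⟨Y, hY⟩ := exists_isConj_mul_of_det_eq_one E hE
  obtain ⟨A₀, B₀, Q, S, hgQS, hS⟩ :=
    exists_eq_upperUnipotent_mul_lowerUnipotent_mul_fromBlocks hg' R₀ (R₀⁻¹ * Y * R₀)
      hR.unit_spec.symm
  have hN : -(g⁻¹.toBlocks₂₁ * (R₀⁻¹ * Y * R₀ * R₀⁻¹).val) = E * Y := by
    simp [E, mul_assoc]
  rw [hN] at hS
  have hYM : IsConj Y.val (R₀⁻¹ * Y * R₀).val := by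
    simpa using isConj_units_conj R₀⁻¹ Y.val
  obtain ⟨A, B, hAB⟩ := exists_fromBlocks_eq_prod_of_isConj (Q := Q) hS (hY.trans hYM)
  refine ⟨![A₀, A 0, A 1, A 2], ![B₀, B 0, B 1], ?_⟩
  rw [hgQS, hAB]
  simp only [mul_assoc]
  rfl

theorem sl2n_eq_prod_of_thirteen_block_unipotents :
    ∀ (K : Type) [Field K] [IsAlgClosed K] (n : ℕ), 1 ≤ n →
    ∀ g : Matrix (Fin n ⊕ Fin n) (Fin n ⊕ Fin n) K, g.det = 1 →
    ∃ A : Fin 7 → Matrix (Fin n) (Fin n) K, ∃ B : Fin 6 → Matrix (Fin n) (Fin n) K,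
      g = Matrix.fromBlocks 1 (A 0) 0 1 * Matrix.fromBlocks 1 0 (B 0) 1 *
          Matrix.fromBlocks 1 (A 1) 0 1 * Matrix.fromBlocks 1 0 (B 1) 1 *
          Matrix.fromBlocks 1 (A 2) 0 1 * Matrix.fromBlocks 1 0 (B 2) 1 *
          Matrix.fromBlocks 1 (A 3) 0 1 * Matrix.fromBlocks 1 0 (B 3) 1 *
          Matrix.fromBlocks 1 (A 4) 0 1 * Matrix.fromBlocks 1 0 (B 4) 1 *
          Matrix.fromBlocks 1 (A 5) 0 1 * Matrix.fromBlocks 1 0 (B 5) 1 *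
          Matrix.fromBlocks 1 (A 6) 0 1 := by
  intro K _ _ n _ g hg
  obtain ⟨B₀, hB₀⟩ := exists_isUnit_toBlocks₂₁_lowerUnipotent_mul
    ((isUnit_iff_isUnit_det g).mpr (hg ▸ isUnit_one))
  obtain ⟨A, B, hAB⟩ := exists_eq_prod_seven_of_isUnit_toBlocks₂₁
    (by rw [det_mul, det_lowerUnipotent, hg, one_mul]) hB₀
  have hg_eq : g = lowerUnipotent (-B₀) * (lowerUnipotent B₀ * g) := by
    rw [← mul_assoc, lowerUnipotent_mul_lowerUnipotent, neg_add_cancel, lowerUnipotent_zero,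
      one_mul]
  refine ⟨![0, 0, 0, A 0, A 1, A 2, A 3], ![0, 0, -B₀, B 0, B 1, B 2], ?_⟩
  rw [hg_eq, hAB]
  simp [upperUnipotent, lowerUnipotent, mul_assoc]
end
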